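/- arXiv:1911.08166 — 5 statements merged into one kernel-verified Lean document; each statement's English description precedes it below -/
import Mathlib

section
/- Let α ∈ (0,1] and θ ∈ (−∞, 1/2), and let ω_k (k ≥ 0) be the Maclaurin coefficients of the FBT-θ generating function. Then ω₀ = ((3−2θ)/(2−2θ))^α, ω₁ = φ₀ω₀/ψ₀, ω₂ = [(φ₀−ψ₁)ω₁ + φ₁ω₀]/(2ψ₀), and for every k ≥ 3, ω_k = (1/(k·ψ₀)) · Σ_{j=1}^{3} [φ_{j−1} − (k−j)ψ_j] ω_{k−j}, where φ₀ = −(α/2)(2θ²−5θ+4), φ₁ = −α(2θ−1)(1−θ), φ₂ = −(αθ/2)(2θ−1), ψ₀ = (1/2)(3−2θ)(1−θ), ψ₁ = (1/2)(1−2θ)(3θ−4), ψ₂ = (1/2)(1−θ)(1−6θ), ψ₃ = (1/2)θ(1−2θ). -/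
open Complex Filter Topology PowerSeries

/-!
With `u ξ = 1 - θ + θ ξ` and `v ξ = (3/2 - θ) - (2 - 2θ) ξ + (1/2 - θ) ξ²`, the generating
function `f = u ^ (-α) * v ^ α` has logarithmic derivative `-α θ / u + α v' / v`, so near `0` it
solves the linear ODE `ψ f' = φ f` with `ψ = u v` and `φ = α (u v' - θ v)`; the `ψⱼ` and `φⱼ` are
the coefficients of these two polynomials. Since `f` is analytic at `0`, the ODE passes to its
Maclaurin series, and comparing the coefficients of `ξ ^ (k - 1)` gives the recursion, while
`ω₀ = f 0`.
-/

section Maclaurin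

variable {𝕜 : Type*} [NontriviallyNormedField 𝕜]

noncomputable def maclaurinSeries (f : 𝕜 → 𝕜) : 𝕜⟦X⟧ :=
  PowerSeries.mk fun k => iteratedDeriv k f 0 / k.factorial

@[simp]
theorem coeff_maclaurinSeries (f : 𝕜 → 𝕜) (k : ℕ) :
    coeff k (maclaurinSeries f) = iteratedDeriv k f 0 / k.factorial :=
  coeff_mk _ _

theorem coeff_zero_maclaurinSeries (f : 𝕜 → 𝕜) : coeff 0 (maclaurinSeries f) = f 0 := by
  simp

theorem maclaurinSeries_congr {f g : 𝕜 → 𝕜} (h : f =ᶠ[𝓝 0] g) :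
    maclaurinSeries f = maclaurinSeries g := by
  ext k
  simp [h.iteratedDeriv_eq k]

theorem iteratedDeriv_polynomial_eval (p : Polynomial 𝕜) (k : ℕ) :
    iteratedDeriv k (fun x => p.eval x) = fun x => (Polynomial.derivative^[k] p).eval x := by
  induction k generalizing p with
  | zero => rfl
  | succ k ih =>
    rw [iteratedDeriv_succ', funext fun x => p.deriv (x := x), ih, Function.iterate_succ_apply]

variable [CharZero 𝕜]

theorem maclaurinSeries_deriv (f : 𝕜 → 𝕜) :
    maclaurinSeries (deriv f) = d⁄dX 𝕜 (maclaurinSeries f) := by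
  ext n
  rw [PowerSeries.coeff_derivative, coeff_maclaurinSeries, coeff_maclaurinSeries,
    ← iteratedDeriv_succ', Nat.factorial_succ]
  push_cast
  field_simp [Nat.factorial_ne_zero]

theorem maclaurinSeries_polynomial_eval (p : Polynomial 𝕜) :
    maclaurinSeries (fun x => p.eval x) = p := by
  ext k
  rw [coeff_maclaurinSeries, iteratedDeriv_polynomial_eval, Polynomial.coeff_coe]
  dsimp only
  rw [← Polynomial.coeff_zero_eq_eval_zero, Polynomial.coeff_iterate_derivative, zero_add,
    Nat.descFactorial_self, nsmul_eq_mul]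
  field_simp [Nat.factorial_ne_zero]

variable [CompleteSpace 𝕜]

theorem maclaurinSeries_mul {f g : 𝕜 → 𝕜} (hf : AnalyticAt 𝕜 f 0) (hg : AnalyticAt 𝕜 g 0) :
    maclaurinSeries (f * g) = maclaurinSeries f * maclaurinSeries g := by
  ext n
  simp only [coeff_maclaurinSeries, iteratedDeriv_mul hf.contDiffAt hg.contDiffAt,
    PowerSeries.coeff_mul, Finset.Nat.sum_antidiagonal_eq_sum_range_succ_mk, Finset.sum_div]
  refine Finset.sum_congr rfl fun i hi => ?_
  rw [Nat.cast_choose _ (Finset.mem_range_succ_iff.mp hi)]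
  field_simp [Nat.factorial_ne_zero]

theorem maclaurinSeries_mul_derivative {f : 𝕜 → 𝕜} {p q : Polynomial 𝕜}
    (hf : AnalyticAt 𝕜 f 0) (h : ∀ᶠ x in 𝓝 0, p.eval x * deriv f x = q.eval x * f x) :
    (p : 𝕜⟦X⟧) * d⁄dX 𝕜 (maclaurinSeries f) = q * maclaurinSeries f := by
  have hp := AnalyticOnNhd.eval_polynomial (𝕜 := 𝕜) p 0 trivial
  have hq := AnalyticOnNhd.eval_polynomial (𝕜 := 𝕜) q 0 trivial
  rw [← maclaurinSeries_polynomial_eval p, ← maclaurinSeries_polynomial_eval q,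
    ← maclaurinSeries_deriv, ← maclaurinSeries_mul hp hf.deriv, ← maclaurinSeries_mul hq hf]
  exact maclaurinSeries_congr h

end Maclaurin

theorem coeff_recurrence_of_cubic_mul_derivative_eq {R : Type*} [CommRing R]
    {a₀ a₁ a₂ a₃ b₀ b₁ b₂ : R} {W : R⟦X⟧}
    (h : (C a₀ + C a₁ * X + C a₂ * X ^ 2 + C a₃ * X ^ 3) * d⁄dX R W
      = (C b₀ + C b₁ * X + C b₂ * X ^ 2) * W) :
    a₀ * coeff 1 W = b₀ * coeff 0 W ∧
    2 * a₀ * coeff 2 W + a₁ * coeff 1 W = b₀ * coeff 1 W + b₁ * coeff 0 W ∧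
    ∀ n : ℕ, (n + 3) * a₀ * coeff (n + 3) W + (n + 2) * a₁ * coeff (n + 2) W
      + (n + 1) * a₂ * coeff (n + 1) W + n * a₃ * coeff n W
      = b₀ * coeff (n + 2) W + b₁ * coeff (n + 1) W + b₂ * coeff n W := by
  -- writing `X` as `X ^ 1` lets `coeff_X_pow_mul'` shift all four terms uniformly
  have hX (G : R⟦X⟧) : X * G = X ^ 1 * G := by rw [pow_one]
  have hc (n : ℕ) := congrArg (coeff n) h
  simp only [add_mul, mul_assoc, map_add, coeff_C_mul, hX, coeff_X_pow_mul', coeff_derivative]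
    at hc
  refine ⟨by simpa using hc 0, ?_, fun n => ?_⟩
  · have h₁ := hc 1
    norm_num at h₁ ⊢
    linear_combination h₁
  · rcases n with _ | n
    · have h₂ := hc 2
      norm_num at h₂ ⊢
      linear_combination h₂
    · have h₃ := hc (n + 3)
      simp [show n + 3 - 2 = n + 1 by omega, show n + 3 - 3 = n by omega] at h₃
      push_cast
      linear_combination h₃

theorem mul_mul_deriv_cpow_mul_cpow {u v : ℂ → ℂ} {u' v' a b x : ℂ} (hu : HasDerivAt u u' x)
    (hv : HasDerivAt v v' x) (hux : u x ∈ slitPlane) (hvx : v x ∈ slitPlane) :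
    u x * v x * deriv (fun ξ => u ξ ^ a * v ξ ^ b) x
      = (a * u' * v x + b * u x * v') * (u x ^ a * v x ^ b) := by
  rw [((hu.cpow_const hux).fun_mul (hv.cpow_const hvx)).deriv,
    cpow_sub _ _ (slitPlane_ne_zero hux), cpow_sub _ _ (slitPlane_ne_zero hvx), cpow_one, cpow_one]
  field_simp [slitPlane_ne_zero hux, slitPlane_ne_zero hvx]

noncomputable def fbtGeneratingFunction (α θ : ℂ) : ℂ → ℂ := fun ξ =>
  (1 - θ + θ * ξ) ^ (-α) * ((3/2 - θ) - (2 - 2 * θ) * ξ + (1/2 - θ) * ξ ^ 2) ^ α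

theorem fbtGeneratingFunction_ode (α θ ξ : ℂ) (hu : 1 - θ + θ * ξ ∈ slitPlane)
    (hv : (3/2 - θ) - (2 - 2 * θ) * ξ + (1/2 - θ) * ξ ^ 2 ∈ slitPlane) :
    (1 - θ + θ * ξ) * ((3/2 - θ) - (2 - 2 * θ) * ξ + (1/2 - θ) * ξ ^ 2)
        * deriv (fbtGeneratingFunction α θ) ξ
      = α * ((1 - θ + θ * ξ) * ((1 - 2 * θ) * ξ - (2 - 2 * θ))
          - θ * ((3/2 - θ) - (2 - 2 * θ) * ξ + (1/2 - θ) * ξ ^ 2))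
        * fbtGeneratingFunction α θ ξ := by
  have hu' : HasDerivAt (fun ξ => 1 - θ + θ * ξ) θ ξ := by
    simpa using ((hasDerivAt_id' ξ).const_mul θ).const_add (1 - θ)
  have hv' : HasDerivAt (fun ξ => (3/2 - θ) - (2 - 2 * θ) * ξ + (1/2 - θ) * ξ ^ 2)
      ((1 - 2 * θ) * ξ - (2 - 2 * θ)) ξ := by
    refine ((((hasDerivAt_id' ξ).const_mul (2 - 2 * θ)).const_sub (3/2 - θ)).add
      ((hasDerivAt_pow 2 ξ).const_mul (1/2 - θ))).congr_deriv ?_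
    push_cast
    ring
  unfold fbtGeneratingFunction
  rw [mul_mul_deriv_cpow_mul_cpow hu' hv' hu hv]
  ring

theorem eventually_fbt_bases_mem_slitPlane {θ : ℂ} (h₁ : 1 - θ ∈ slitPlane)
    (h₃ : 3/2 - θ ∈ slitPlane) :
    ∀ᶠ ξ in 𝓝 (0 : ℂ), 1 - θ + θ * ξ ∈ slitPlane ∧
      (3/2 - θ) - (2 - 2 * θ) * ξ + (1/2 - θ) * ξ ^ 2 ∈ slitPlane := by
  have hu : ContinuousAt (fun ξ : ℂ => 1 - θ + θ * ξ) 0 := by fun_prop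
  have hv : ContinuousAt (fun ξ : ℂ => (3/2 - θ) - (2 - 2 * θ) * ξ + (1/2 - θ) * ξ ^ 2) 0 := by
    fun_prop
  exact (hu.eventually_mem (isOpen_slitPlane.mem_nhds (by simpa using h₁))).and
    (hv.eventually_mem (isOpen_slitPlane.mem_nhds (by simpa using h₃)))

theorem analyticAt_fbtGeneratingFunction (α : ℂ) {θ : ℂ} (h₁ : 1 - θ ∈ slitPlane)
    (h₃ : 3/2 - θ ∈ slitPlane) : AnalyticAt ℂ (fbtGeneratingFunction α θ) 0 :=
  analyticAt_iff_eventually_differentiableAt.2 <|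
    (eventually_fbt_bases_mem_slitPlane h₁ h₃).mono fun ξ ⟨hu, hv⟩ => by
      unfold fbtGeneratingFunction
      fun_prop (disch := assumption)

theorem fbtGeneratingFunction_zero (α θ : ℝ) (hθ : θ < 1) :
    fbtGeneratingFunction α θ 0 = (((3 - 2 * θ) / (2 - 2 * θ)) ^ α : ℝ) := by
  have h₁ : (0 : ℝ) ≤ 1 - θ := by linarith
  have h₃ : (0 : ℝ) ≤ 3/2 - θ := by linarith
  rw [show (3 - 2 * θ) / (2 - 2 * θ) = (3/2 - θ) / (1 - θ) by field_simp,
    Real.div_rpow h₃ h₁, ofReal_div, ofReal_cpow h₃, ofReal_cpow h₁, fbtGeneratingFunction]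
  push_cast
  simp [cpow_neg, div_eq_mul_inv, mul_comm]

theorem fbtGeneratingFunction_maclaurinSeries_ode (α θ : ℝ) (hθ : θ < 1) :
    (C ((1/2 * (3 - 2 * θ) * (1 - θ) : ℝ) : ℂ)
        + C ((1/2 * (1 - 2 * θ) * (3 * θ - 4) : ℝ) : ℂ) * X
        + C ((1/2 * (1 - θ) * (1 - 6 * θ) : ℝ) : ℂ) * X ^ 2
        + C ((1/2 * θ * (1 - 2 * θ) : ℝ) : ℂ) * X ^ 3)
        * d⁄dX ℂ (maclaurinSeries (fbtGeneratingFunction α θ))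
      = (C ((-(α/2) * (2 * θ ^ 2 - 5 * θ + 4) : ℝ) : ℂ)
        + C ((-α * (2 * θ - 1) * (1 - θ) : ℝ) : ℂ) * X
        + C ((-(α * θ / 2) * (2 * θ - 1) : ℝ) : ℂ) * X ^ 2)
        * maclaurinSeries (fbtGeneratingFunction α θ) := by
  have h₁ : 1 - (θ : ℂ) ∈ slitPlane := by
    exact_mod_cast ofReal_mem_slitPlane.2 (by linarith : 0 < 1 - θ)
  have h₃ : 3/2 - (θ : ℂ) ∈ slitPlane := by
    have h := ofReal_mem_slitPlane.2 (by linarith : (0 : ℝ) < 3/2 - θ)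
    push_cast at h
    exact h
  simp only [← Polynomial.coe_C, ← Polynomial.coe_X, ← Polynomial.coe_pow, ← Polynomial.coe_mul,
    ← Polynomial.coe_add]
  refine maclaurinSeries_mul_derivative (analyticAt_fbtGeneratingFunction α h₁ h₃)
    ((eventually_fbt_bases_mem_slitPlane h₁ h₃).mono fun ξ ⟨hu, hv⟩ => ?_)
  simp only [Polynomial.eval_add, Polynomial.eval_mul, Polynomial.eval_C, Polynomial.eval_X,
    Polynomial.eval_pow]
  push_cast
  linear_combination fbtGeneratingFunction_ode α θ ξ hu hv

theorem fbt_theta_weights_recursion_general (α θ : ℝ) (hθ : θ < 1/2)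
    (ω : ℕ → ℝ)
    (hω : ∀ k : ℕ, (ω k : ℂ) =
      iteratedDeriv k
        (fun ξ : ℂ =>
          ((1 : ℂ) - (θ : ℂ) + (θ : ℂ) * ξ) ^ (-(α : ℂ)) *
            (((3/2 : ℂ) - (θ : ℂ)) - ((2 : ℂ) - 2 * (θ : ℂ)) * ξ
              + ((1/2 : ℂ) - (θ : ℂ)) * ξ ^ 2) ^ (α : ℂ)) 0
        / (Nat.factorial k : ℂ))
    (φ0 φ1 φ2 ψ0 ψ1 ψ2 ψ3 : ℝ)
    (hφ0 : φ0 = -(α/2) * (2*θ^2 - 5*θ + 4))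
    (hφ1 : φ1 = -α * (2*θ - 1) * (1 - θ))
    (hφ2 : φ2 = -(α*θ/2) * (2*θ - 1))
    (hψ0 : ψ0 = (1/2) * (3 - 2*θ) * (1 - θ))
    (hψ1 : ψ1 = (1/2) * (1 - 2*θ) * (3*θ - 4))
    (hψ2 : ψ2 = (1/2) * (1 - θ) * (1 - 6*θ))
    (hψ3 : ψ3 = (1/2) * θ * (1 - 2*θ)) :
    ω 0 = ((3 - 2*θ)/(2 - 2*θ)) ^ α ∧
    ω 1 = φ0 * ω 0 / ψ0 ∧
    ω 2 = ((φ0 - ψ1) * ω 1 + φ1 * ω 0) / (2 * ψ0) ∧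
    ∀ k : ℕ, 3 ≤ k →
      ω k = (1 / (k * ψ0)) *
        ((φ0 - ((k : ℝ) - 1) * ψ1) * ω (k - 1)
          + (φ1 - ((k : ℝ) - 2) * ψ2) * ω (k - 2)
          + (φ2 - ((k : ℝ) - 3) * ψ3) * ω (k - 3)) := by
  have hψ0_pos : 0 < ψ0 := by rw [hψ0]; nlinarith
  have hW (k : ℕ) : coeff k (maclaurinSeries (fbtGeneratingFunction α θ)) = ω k :=
    (coeff_maclaurinSeries _ k).trans (hω k).symm
  obtain ⟨hrec₁, hrec₂, hrec⟩ := coeff_recurrence_of_cubic_mul_derivative_eq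
    (fbtGeneratingFunction_maclaurinSeries_ode α θ (by linarith))
  simp only [hW, ← hψ0, ← hψ1, ← hψ2, ← hψ3, ← hφ0, ← hφ1, ← hφ2] at hrec₁ hrec₂ hrec
  norm_cast at hrec₁ hrec₂ hrec
  refine ⟨?_, by field_simp; linear_combination hrec₁, by field_simp; linear_combination hrec₂,
    fun k hk => ?_⟩
  · have hω₀ := hW 0
    rw [coeff_zero_maclaurinSeries, fbtGeneratingFunction_zero α θ (by linarith)] at hω₀
    exact_mod_cast hω₀.symm
  · obtain ⟨n, rfl⟩ := Nat.exists_eq_add_of_le' hk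
    simp only [Nat.add_sub_cancel, show n + 3 - 1 = n + 2 by omega,
      show n + 3 - 2 = n + 1 by omega]
    field_simp
    push_cast at hrec ⊢
    linear_combination hrec n

/-- recursive formula for the Maclaurin coefficients (convolution
weights) of the FBT-θ generating function
`ω^{(α)}(ξ) = (1−θ+θξ)^{−α}·[(3/2−θ) − (2−2θ)ξ + (1/2−θ)ξ²]^{α}`. -/
theorem fbt_theta_weights_recursion (α θ : ℝ) (hα : α ∈ Set.Ioc (0:ℝ) 1) (hθ : θ < 1/2)
    (ω : ℕ → ℝ)
    (hω : ∀ k : ℕ, (ω k : ℂ) =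
      iteratedDeriv k
        (fun ξ : ℂ =>
          ((1 : ℂ) - (θ : ℂ) + (θ : ℂ) * ξ) ^ (-(α : ℂ)) *
            (((3/2 : ℂ) - (θ : ℂ)) - ((2 : ℂ) - 2 * (θ : ℂ)) * ξ
              + ((1/2 : ℂ) - (θ : ℂ)) * ξ ^ 2) ^ (α : ℂ)) 0
        / (Nat.factorial k : ℂ))
    (φ0 φ1 φ2 ψ0 ψ1 ψ2 ψ3 : ℝ)
    (hφ0 : φ0 = -(α/2) * (2*θ^2 - 5*θ + 4))
    (hφ1 : φ1 = -α * (2*θ - 1) * (1 - θ))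
    (hφ2 : φ2 = -(α*θ/2) * (2*θ - 1))
    (hψ0 : ψ0 = (1/2) * (3 - 2*θ) * (1 - θ))
    (hψ1 : ψ1 = (1/2) * (1 - 2*θ) * (3*θ - 4))
    (hψ2 : ψ2 = (1/2) * (1 - θ) * (1 - 6*θ))
    (hψ3 : ψ3 = (1/2) * θ * (1 - 2*θ)) :
    ω 0 = ((3 - 2*θ)/(2 - 2*θ)) ^ α ∧
    ω 1 = φ0 * ω 0 / ψ0 ∧
    ω 2 = ((φ0 - ψ1) * ω 1 + φ1 * ω 0) / (2 * ψ0) ∧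
    ∀ k : ℕ, 3 ≤ k →
      ω k = (1 / (k * ψ0)) *
        ((φ0 - ((k : ℝ) - 1) * ψ1) * ω (k - 1)
          + (φ1 - ((k : ℝ) - 2) * ψ2) * ω (k - 2)
          + (φ2 - ((k : ℝ) - 3) * ψ3) * ω (k - 3)) :=
  fbt_theta_weights_recursion_general α θ hθ ω hω φ0 φ1 φ2 ψ0 ψ1 ψ2 ψ3 hφ0 hφ1 hφ2 hψ0 hψ1 hψ2 hψ3
end

section
/- Let ω₀ = 3/2, ω₁ = −2, ω₂ = 1/2 and ω_k = 0 for k ≥ 3 (the BDF2 weights, i.e., the coefficients of 3/2 − 2ξ + (1/2)ξ²). Then for every integer n ≥ 1 and every real vector (v⁰, …, v^{n−1}) ∈ ℝⁿ, one has Σ_{j=0}^{n−1} v^j Σ_{k=0}^{j} ω_{j−k} v^k ≥ (1/4)(v^{n−1})²; equivalently, with the convention v^{−1} = v^{−2} = 0, Σ_{j=0}^{n−1} v^j ((3/2)v^j − 2v^{j−1} + (1/2)v^{j−2}) ≥ (1/4)(v^{n−1})². -/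
open Finset

/-! With `E(a, b) = a² + (2a - b)²` one has
`4 a (3/2 a - 2 b + 1/2 c) = E(a, b) - E(b, c) + (a - 2b + c)²`,
so four times the BDF2 form telescopes to `E(vⁿ⁻¹, vⁿ⁻²)` plus a sum of squares (`E` vanishes on
the zero padding `v⁻¹ = v⁻² = 0`), and `E(a, b) ≥ a²`. -/

noncomputable def bdf2Weight (k : ℕ) : ℝ :=
  if k = 0 then 3/2 else if k = 1 then -2 else if k = 2 then 1/2 else 0

lemma sum_range_succ_bdf2Weight_mul (v : ℕ → ℝ) (j : ℕ) :
    ∑ k ∈ range (j + 1), bdf2Weight (j - k) * v k =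
      3/2 * v j - 2 * (if 1 ≤ j then v (j - 1) else 0)
        + 1/2 * (if 2 ≤ j then v (j - 2) else 0) := by
  rw [← Nat.sum_antidiagonal_eq_sum_range_succ (fun k i => bdf2Weight i * v k),
    ← Nat.sum_antidiagonal_swap]
  simp only [Prod.fst_swap, Prod.snd_swap]
  rw [Nat.sum_antidiagonal_eq_sum_range_succ (fun i k => bdf2Weight i * v k)]
  rcases j with _ | _ | m
  · simp [bdf2Weight]
  · simp only [bdf2Weight, sum_range_succ, range_one, sum_singleton, Nat.reduceAdd, tsub_zero,
      tsub_self, ↓reduceIte, one_ne_zero, le_refl, Nat.not_ofNat_le_one]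
    ring
  · simp only [bdf2Weight, sum_range_succ', Nat.add_eq_zero_iff, one_ne_zero, and_false,
      ↓reduceIte, Nat.add_eq_right, Nat.reduceSubDiff, Nat.reduceEqDiff, ite_mul, zero_mul,
      sum_const_zero, le_add_iff_nonneg_left, zero_le, add_tsub_cancel_right, tsub_zero]
    ring

noncomputable def bdf2Energy (a b : ℝ) : ℝ := a ^ 2 + (2 * a - b) ^ 2

lemma four_mul_bdf2_step (a b c : ℝ) :
    4 * (a * (3/2 * a - 2 * b + 1/2 * c)) =
      bdf2Energy a b - bdf2Energy b c + (a - 2 * b + c) ^ 2 := by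
  unfold bdf2Energy; ring

lemma four_mul_sum_bdf2_eq (u : ℕ → ℝ) (n : ℕ) :
    4 * ∑ j ∈ range n, u (j + 2) * (3/2 * u (j + 2) - 2 * u (j + 1) + 1/2 * u j) =
      bdf2Energy (u (n + 1)) (u n) - bdf2Energy (u 1) (u 0)
        + ∑ j ∈ range n, (u (j + 2) - 2 * u (j + 1) + u j) ^ 2 := by
  rw [mul_sum]
  simp only [four_mul_bdf2_step, sum_add_distrib]
  exact congrArg (· + _) (sum_range_sub (fun j => bdf2Energy (u (j + 1)) (u j)) n)

lemma sq_le_four_mul_sum_bdf2 (u : ℕ → ℝ) (h₀ : u 0 = 0) (h₁ : u 1 = 0) (n : ℕ) :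
    u (n + 1) ^ 2 ≤
      4 * ∑ j ∈ range n, u (j + 2) * (3/2 * u (j + 2) - 2 * u (j + 1) + 1/2 * u j) := by
  rw [four_mul_sum_bdf2_eq, h₀, h₁]
  have : 0 ≤ ∑ j ∈ range n, (u (j + 2) - 2 * u (j + 1) + u j) ^ 2 :=
    sum_nonneg fun j _ => sq_nonneg _
  unfold bdf2Energy
  nlinarith [sq_nonneg (2 * u (n + 1) - u n)]

lemma sq_le_four_mul_sum_bdf2_of_zero_pad (v : ℕ → ℝ) (n : ℕ) :
    v n ^ 2 ≤ 4 * ∑ j ∈ range (n + 1), v j *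
      (3/2 * v j - 2 * (if 1 ≤ j then v (j - 1) else 0)
        + 1/2 * (if 2 ≤ j then v (j - 2) else 0)) := by
  -- `u` is `v` shifted two places to the right, with the padding zeros as `u 0`, `u 1`
  set u : ℕ → ℝ := fun i => if 2 ≤ i then v (i - 2) else 0 with hu
  have h_shift : ∀ j, v j * (3/2 * v j - 2 * (if 1 ≤ j then v (j - 1) else 0)
      + 1/2 * (if 2 ≤ j then v (j - 2) else 0)) =
      u (j + 2) * (3/2 * u (j + 2) - 2 * u (j + 1) + 1/2 * u j) := by
    intro j
    simp [hu]
  simpa [h_shift, hu] using sq_le_four_mul_sum_bdf2 u (by simp [hu]) (by simp [hu]) (n + 1)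

/-- the BDF2 quadratic form is bounded below by `(1/4)(v^{n-1})²`,
with constant `ε₀ = 1/4` independent of `n` and of the vector. -/
theorem bdf2_quadratic_form_lower_bound
    (ω : ℕ → ℝ)
    (hω : ω = fun k => if k = 0 then 3/2 else if k = 1 then -2 else if k = 2 then 1/2 else 0) :
    ∀ n : ℕ, 1 ≤ n → ∀ v : ℕ → ℝ,
      (1/4) * (v (n - 1))^2 ≤
        ∑ j ∈ Finset.range n, v j * ∑ k ∈ Finset.range (j + 1), ω (j - k) * v k ∧
      (1/4) * (v (n - 1))^2 ≤
        ∑ j ∈ Finset.range n, v j *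
          ((3/2) * v j - 2 * (if 1 ≤ j then v (j - 1) else 0)
            + (1/2) * (if 2 ≤ j then v (j - 2) else 0)) := by
  rintro n hn v
  obtain ⟨m, rfl⟩ := Nat.exists_eq_add_of_le' hn
  have h_conv : ∀ j, ∑ k ∈ range (j + 1), ω (j - k) * v k =
      3/2 * v j - 2 * (if 1 ≤ j then v (j - 1) else 0)
        + 1/2 * (if 2 ≤ j then v (j - 2) else 0) :=
    hω ▸ sum_range_succ_bdf2Weight_mul v
  have key := sq_le_four_mul_sum_bdf2_of_zero_pad v m
  simp only [h_conv, Nat.add_sub_cancel]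
  constructor <;> linarith
end

section
/- Let α ∈ (0,1] and θ ∈ (−∞, 1/2). For every x ∈ (0, π], the real part f_α(x) of the FBT-θ generating function evaluated at e^{ix} (equivalently f_α(x) = (1/2)[ω^{(α)}(e^{ix}) + ω^{(α)}(e^{−ix})]) equals ((3−2θ)/(2−2θ))^α · (2 sin(x/2))^α · ((1+λ₂²−2λ₂ cos x)/(1+λ₁²−2λ₁ cos x))^{α/2} · cos(α·(x/2 − π/2 + φ₂(x) − φ₁(x))). -/
/-!
On the unit circle both factors of `ω` split into elementary factors with explicit polar forms:
`1 - θ + θξ = (1 - θ)(1 - λ₁ξ)`, `(3/2 - θ) - (2 - 2θ)ξ + (1/2 - θ)ξ² = (3/2 - θ)(1 - ξ)(1 - λ₂ξ)`,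
`1 - λ e^{ix} = √(1 + λ² - 2λ cos x) e^{iφ_λ(x)}` for `|λ| < 1`, and
`1 - e^{ix} = 2 sin(x/2) e^{i(x/2 - π/2)}`. For `x ∈ (0, π]` the resulting arguments `ψ₁ = φ₁(x)`
and `ψ₂ = x/2 - π/2 + φ₂(x)` lie in `(-π, π)`, so the principal powers act on them by plain
scaling: `ω(e^{ix}) = (r₂/r₁)^α e^{iα(ψ₂ - ψ₁)}`. Since `ω(e^{-ix})` is its complex conjugate,
the average of the two is `(r₂/r₁)^α cos(α(ψ₂ - ψ₁))`.
-/

open Complex Real ComplexConjugate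

lemma mul_cos_lt_one {l : ℝ} (hl : |l| < 1) (x : ℝ) : l * Real.cos x < 1 :=
  calc l * Real.cos x ≤ |l * Real.cos x| := le_abs_self _
    _ = |l| * |Real.cos x| := abs_mul _ _
    _ ≤ |l| := mul_le_of_le_one_right (abs_nonneg _) (Real.abs_cos_le_one x)
    _ < 1 := hl

lemma one_add_sq_sub_two_mul_cos_pos {l : ℝ} (hl : |l| < 1) (x : ℝ) :
    0 < 1 + l ^ 2 - 2 * l * Real.cos x := by
  nlinarith [mul_cos_lt_one hl x, sq_nonneg (l * Real.sin x), Real.sin_sq_add_cos_sq x]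

lemma add_mul_I_eq_sqrt_mul_exp_arctan_mul_I (a b : ℝ) (ha : 0 < a) :
    (a + b * I : ℂ) = (√(a ^ 2 + b ^ 2) : ℂ) * cexp (Real.arctan (b / a) * I) := by
  have hs : √(a ^ 2 + b ^ 2) = a * √(1 + (b / a) ^ 2) := by
    rw [← Real.sqrt_sq ha.le, ← Real.sqrt_mul (sq_nonneg a), Real.sqrt_sq ha.le]
    congr 1; field_simp
  rw [exp_mul_I, ← ofReal_cos, ← ofReal_sin, Real.cos_arctan, Real.sin_arctan, hs]
  set s := √(1 + (b / a) ^ 2)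
  have hs0 : (s : ℂ) ≠ 0 := ofReal_ne_zero.2 (by positivity)
  have ha0 : (a : ℂ) ≠ 0 := ofReal_ne_zero.2 ha.ne'
  push_cast
  field_simp

lemma one_sub_ofReal_mul_exp_mul_I (l x : ℝ) (hl : |l| < 1) :
    1 - l * cexp (x * I) = (√(1 + l ^ 2 - 2 * l * Real.cos x) : ℂ) *
      cexp (Real.arctan (l * Real.sin x / (l * Real.cos x - 1)) * I) := by
  have h := add_mul_I_eq_sqrt_mul_exp_arctan_mul_I (1 - l * Real.cos x) (-(l * Real.sin x))
    (by linarith [mul_cos_lt_one hl x])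
  rw [← neg_div_neg_eq, neg_neg, neg_sub,
    show (1 - l * Real.cos x) ^ 2 + (-(l * Real.sin x)) ^ 2 = 1 + l ^ 2 - 2 * l * Real.cos x by
      linear_combination l ^ 2 * Real.sin_sq_add_cos_sq x] at h
  rw [← h, exp_mul_I, ← ofReal_cos, ← ofReal_sin]
  push_cast; ring

lemma one_sub_exp_mul_I (x : ℝ) :
    1 - cexp (x * I) = ((2 * Real.sin (x / 2) : ℝ) : ℂ) * cexp ((x / 2 - π / 2 : ℝ) * I) := by
  have hsq : cexp (x * I) = cexp (x / 2 * I) ^ 2 := by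
    rw [← Complex.exp_nat_mul]; congr 1; push_cast; ring
  have hinv : cexp (-(x / 2 : ℂ) * I) * cexp (x / 2 * I) = 1 := by
    rw [← Complex.exp_add, ← Complex.exp_zero]; congr 1; ring
  rw [ofReal_mul, ofReal_sin, Complex.sin]
  push_cast
  rw [show ((x : ℂ) / 2 - π / 2) * I = x / 2 * I - π / 2 * I by ring, Complex.exp_sub,
    exp_pi_div_two_mul_I, hsq, div_I]
  linear_combination
    (cexp (-(x / 2 : ℂ) * I) - cexp (x / 2 * I)) * cexp (x / 2 * I) * I_sq - hinv

lemma cpow_ofReal_mul_exp_mul_I (r ψ w : ℝ) (hr : 0 < r) (hψ : ψ ∈ Set.Ioc (-π) π) :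
    ((r : ℂ) * cexp (ψ * I)) ^ (w : ℂ) = ((r ^ w : ℝ) : ℂ) * cexp ((w * ψ : ℝ) * I) := by
  rw [cpow_def_of_ne_zero (by simp [hr.ne']), log_ofReal_mul hr (Complex.exp_ne_zero _),
    log_exp (by simpa using hψ.1) (by simpa using hψ.2), ofReal_cpow hr.le,
    cpow_def_of_ne_zero (ofReal_ne_zero.2 hr.ne'), ← Complex.exp_add, ofReal_log hr.le]
  congr 1; push_cast; ring

lemma cpow_neg_mul_cpow_add_conj (α r₁ r₂ ψ₁ ψ₂ : ℝ) (hr₁ : 0 < r₁) (hr₂ : 0 < r₂)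
    (hψ₁ : ψ₁ ∈ Set.Ioo (-π) π) (hψ₂ : ψ₂ ∈ Set.Ioo (-π) π) :
    ((r₁ : ℂ) * cexp (ψ₁ * I)) ^ (-(α : ℂ)) * ((r₂ : ℂ) * cexp (ψ₂ * I)) ^ (α : ℂ) +
      (conj ((r₁ : ℂ) * cexp (ψ₁ * I))) ^ (-(α : ℂ)) *
        (conj ((r₂ : ℂ) * cexp (ψ₂ * I))) ^ (α : ℂ) =
      2 * (((r₂ / r₁) ^ α * Real.cos (α * (ψ₂ - ψ₁)) : ℝ) : ℂ) := by
  have hconj (r ψ : ℝ) : conj ((r : ℂ) * cexp (ψ * I)) = r * cexp ((-ψ : ℝ) * I) := by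
    rw [map_mul, conj_ofReal, ← Complex.exp_conj]; simp
  have hIoc {ψ : ℝ} (h : ψ ∈ Set.Ioo (-π) π) : ψ ∈ Set.Ioc (-π) π := Set.Ioo_subset_Ioc_self h
  have hIoc_neg {ψ : ℝ} (h : ψ ∈ Set.Ioo (-π) π) : -ψ ∈ Set.Ioc (-π) π :=
    ⟨by linarith [h.2], by linarith [h.1]⟩
  have hforward : cexp ((-α * ψ₁ : ℝ) * I) * cexp ((α * ψ₂ : ℝ) * I) =
      cexp ((α * (ψ₂ - ψ₁) : ℝ) * I) := by
    rw [← Complex.exp_add]; congr 1; push_cast; ring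
  have hbackward : cexp ((-α * -ψ₁ : ℝ) * I) * cexp ((α * -ψ₂ : ℝ) * I) =
      cexp (-((α * (ψ₂ - ψ₁) : ℝ) : ℂ) * I) := by
    rw [← Complex.exp_add]; congr 1; push_cast; ring
  rw [hconj, hconj, show -(α : ℂ) = ((-α : ℝ) : ℂ) by push_cast; rfl,
    cpow_ofReal_mul_exp_mul_I _ _ _ hr₁ (hIoc hψ₁),
    cpow_ofReal_mul_exp_mul_I _ _ _ hr₂ (hIoc hψ₂),
    cpow_ofReal_mul_exp_mul_I _ _ _ hr₁ (hIoc_neg hψ₁),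
    cpow_ofReal_mul_exp_mul_I _ _ _ hr₂ (hIoc_neg hψ₂),
    Real.div_rpow hr₂.le hr₁.le, Real.rpow_neg hr₁.le]
  calc _ = ((r₁ ^ α)⁻¹ * r₂ ^ α : ℝ) *
        (cexp ((-α * ψ₁ : ℝ) * I) * cexp ((α * ψ₂ : ℝ) * I) +
          cexp ((-α * -ψ₁ : ℝ) * I) * cexp ((α * -ψ₂ : ℝ) * I)) := by
        push_cast; ring
    _ = _ := by
        rw [hforward, hbackward]; push_cast; rw [Complex.cos]; ring

lemma abs_div_sub_one_lt_one {θ : ℝ} (hθ : θ < 1 / 2) : |θ / (θ - 1)| < 1 := by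
  rw [abs_div, abs_of_neg (by linarith : θ - 1 < 0), div_lt_one (by linarith)]
  exact abs_lt.mpr ⟨by linarith, by linarith⟩

lemma abs_one_sub_two_mul_div_three_sub_two_mul_lt_one {θ : ℝ} (hθ : θ < 1 / 2) :
    |(1 - 2 * θ) / (3 - 2 * θ)| < 1 := by
  rw [abs_of_pos (div_pos (by linarith) (by linarith)), div_lt_one (by linarith)]
  linarith

lemma fbt_linear_factor_polar {θ l : ℝ} (hθ : θ < 1 / 2) (hl : l = θ / (θ - 1)) (x : ℝ) :
    (1 : ℂ) - θ + θ * cexp (x * I) =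
      (((1 - θ) * √(1 + l ^ 2 - 2 * l * Real.cos x) : ℝ) : ℂ) *
        cexp (Real.arctan (l * Real.sin x / (l * Real.cos x - 1)) * I) := by
  have hfactor : (1 : ℂ) - θ + θ * cexp (x * I) = (1 - θ) * (1 - l * cexp (x * I)) := by
    have : (θ : ℂ) - 1 ≠ 0 := by exact_mod_cast (by linarith : θ - 1 ≠ 0)
    rw [hl]; push_cast; field_simp; ring
  rw [hfactor, one_sub_ofReal_mul_exp_mul_I l x (hl ▸ abs_div_sub_one_lt_one hθ)]
  push_cast; ring

lemma fbt_quadratic_factor_polar {θ l : ℝ} (hθ : θ < 1 / 2)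
    (hl : l = (1 - 2 * θ) / (3 - 2 * θ)) (x : ℝ) :
    ((3 / 2 : ℂ) - θ) - (2 - 2 * θ) * cexp (x * I) + ((1 / 2 : ℂ) - θ) * cexp (x * I) ^ 2 =
      (((3 / 2 - θ) * (2 * Real.sin (x / 2)) * √(1 + l ^ 2 - 2 * l * Real.cos x) : ℝ) : ℂ) *
        cexp ((x / 2 - π / 2 + Real.arctan (l * Real.sin x / (l * Real.cos x - 1)) : ℝ) * I) := by
  have hfactor : ((3 / 2 : ℂ) - θ) - (2 - 2 * θ) * cexp (x * I) +
      ((1 / 2 : ℂ) - θ) * cexp (x * I) ^ 2 =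
      (3 / 2 - θ) * ((1 - cexp (x * I)) * (1 - l * cexp (x * I))) := by
    have : (3 : ℂ) - 2 * θ ≠ 0 := by exact_mod_cast (by linarith : 3 - 2 * θ ≠ 0)
    rw [hl]; push_cast; field_simp; ring
  rw [hfactor, one_sub_exp_mul_I,
    one_sub_ofReal_mul_exp_mul_I l x (hl ▸ abs_one_sub_two_mul_div_three_sub_two_mul_lt_one hθ),
    ofReal_add, add_mul, Complex.exp_add]
  push_cast; ring

lemma fbt_modulus_rpow {θ : ℝ} (hθ : θ < 1) (α s Q₁ Q₂ : ℝ) (hs : 0 ≤ s) (hQ₁ : 0 ≤ Q₁)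
    (hQ₂ : 0 ≤ Q₂) :
    ((3 / 2 - θ) * s * √Q₂ / ((1 - θ) * √Q₁)) ^ α =
      ((3 - 2 * θ) / (2 - 2 * θ)) ^ α * s ^ α * (Q₂ / Q₁) ^ (α / 2) := by
  have hcoef : 0 ≤ (3 - 2 * θ) / (2 - 2 * θ) := div_nonneg (by linarith) (by linarith)
  rw [show (3 / 2 - θ) * s * √Q₂ / ((1 - θ) * √Q₁) = (3 - 2 * θ) / (2 - 2 * θ) * s * √(Q₂ / Q₁) by
      rw [Real.sqrt_div hQ₂]; field_simp,
    Real.mul_rpow (mul_nonneg hcoef hs) (Real.sqrt_nonneg _), Real.mul_rpow hcoef hs,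
    Real.sqrt_eq_rpow, ← Real.rpow_mul (div_nonneg hQ₂ hQ₁), one_div_mul_eq_div]

theorem fbt_theta_symbol_polar_form_general (α θ : ℝ) (hθ : θ < 1/2)
    (l1 l2 : ℝ) (hl1 : l1 = θ / (θ - 1)) (hl2 : l2 = (1 - 2*θ) / (3 - 2*θ))
    (ω : ℂ → ℂ)
    (hω : ∀ ξ : ℂ, ω ξ =
      ((1 : ℂ) - (θ : ℂ) + (θ : ℂ) * ξ) ^ (-(α : ℂ)) *
        (((3/2 : ℂ) - (θ : ℂ)) - ((2 : ℂ) - 2 * (θ : ℂ)) * ξ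
          + ((1/2 : ℂ) - (θ : ℂ)) * ξ ^ 2) ^ (α : ℂ))
    (φ1 φ2 : ℝ → ℝ)
    (hφ1 : ∀ x, φ1 x = Real.arctan (l1 * Real.sin x / (l1 * Real.cos x - 1)))
    (hφ2 : ∀ x, φ2 x = Real.arctan (l2 * Real.sin x / (l2 * Real.cos x - 1))) :
    ∀ x ∈ Set.Ioc (0 : ℝ) π,
      (1/2 : ℂ) * (ω (Complex.exp (Complex.I * x)) + ω (Complex.exp (-(Complex.I * x)))) =
        ((((3 - 2*θ)/(2 - 2*θ)) ^ α * (2 * Real.sin (x/2)) ^ α *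
          ((1 + l2^2 - 2*l2*Real.cos x) / (1 + l1^2 - 2*l1*Real.cos x)) ^ (α/2) *
          Real.cos (α * (x/2 - π/2 + φ2 x - φ1 x)) : ℝ) : ℂ) := by
  intro x ⟨hx₀, hxπ⟩
  have hQ₁ := one_add_sq_sub_two_mul_cos_pos (hl1 ▸ abs_div_sub_one_lt_one hθ) x
  have hQ₂ := one_add_sq_sub_two_mul_cos_pos
    (hl2 ▸ abs_one_sub_two_mul_div_three_sub_two_mul_lt_one hθ) x
  have hsin : 0 < Real.sin (x / 2) := Real.sin_pos_of_pos_of_lt_pi (by linarith) (by linarith)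
  obtain ⟨hφ₁lo, hφ₁hi⟩ := hφ1 x ▸ Real.arctan_mem_Ioo _
  obtain ⟨hφ₂lo, hφ₂hi⟩ := hφ2 x ▸ Real.arctan_mem_Ioo _
  have hlinear := fbt_linear_factor_polar hθ hl1 x
  have hquadratic := fbt_quadratic_factor_polar hθ hl2 x
  rw [← hφ1] at hlinear
  rw [← hφ2] at hquadratic
  have hlinear_conj (ξ : ℂ) : (1 : ℂ) - θ + θ * conj ξ = conj (1 - θ + θ * ξ) := by simp
  have hquadratic_conj (ξ : ℂ) :
      ((3 / 2 : ℂ) - θ) - (2 - 2 * θ) * conj ξ + ((1 / 2 : ℂ) - θ) * conj ξ ^ 2 =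
        conj (((3 / 2 : ℂ) - θ) - (2 - 2 * θ) * ξ + ((1 / 2 : ℂ) - θ) * ξ ^ 2) := by
    simp [map_ofNat]
  have hξ : cexp (-(I * x)) = conj (cexp (x * I)) := by rw [← Complex.exp_conj]; simp [mul_comm]
  rw [hω, hω, hξ, mul_comm I, hlinear_conj, hquadratic_conj, hlinear, hquadratic,
    cpow_neg_mul_cpow_add_conj _ _ _ _ _ (mul_pos (by linarith) (Real.sqrt_pos.2 hQ₁))
      (mul_pos (mul_pos (by linarith) (by linarith)) (Real.sqrt_pos.2 hQ₂))
      ⟨by linarith, by linarith⟩ ⟨by linarith, by linarith⟩,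
    fbt_modulus_rpow (by linarith) _ _ _ _ (by positivity) hQ₁.le hQ₂.le]
  ring

/-- polar form of the real part `f_α(x) = (1/2)[ω^{(α)}(e^{ix}) + ω^{(α)}(e^{−ix})]`
of the FBT-θ generating function on the unit circle, for `x ∈ (0, π]`. -/
theorem fbt_theta_symbol_polar_form (α θ : ℝ) (hα : α ∈ Set.Ioc (0:ℝ) 1) (hθ : θ < 1/2)
    (l1 l2 : ℝ) (hl1 : l1 = θ / (θ - 1)) (hl2 : l2 = (1 - 2*θ) / (3 - 2*θ))
    (ω : ℂ → ℂ)
    (hω : ∀ ξ : ℂ, ω ξ =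
      ((1 : ℂ) - (θ : ℂ) + (θ : ℂ) * ξ) ^ (-(α : ℂ)) *
        (((3/2 : ℂ) - (θ : ℂ)) - ((2 : ℂ) - 2 * (θ : ℂ)) * ξ
          + ((1/2 : ℂ) - (θ : ℂ)) * ξ ^ 2) ^ (α : ℂ))
    (φ1 φ2 : ℝ → ℝ)
    (hφ1 : ∀ x, φ1 x = Real.arctan (l1 * Real.sin x / (l1 * Real.cos x - 1)))
    (hφ2 : ∀ x, φ2 x = Real.arctan (l2 * Real.sin x / (l2 * Real.cos x - 1))) :
    ∀ x ∈ Set.Ioc (0 : ℝ) π,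
      (1/2 : ℂ) * (ω (Complex.exp (Complex.I * x)) + ω (Complex.exp (-(Complex.I * x)))) =
        ((((3 - 2*θ)/(2 - 2*θ)) ^ α * (2 * Real.sin (x/2)) ^ α *
          ((1 + l2^2 - 2*l2*Real.cos x) / (1 + l1^2 - 2*l1*Real.cos x)) ^ (α/2) *
          Real.cos (α * (x/2 - π/2 + φ2 x - φ1 x)) : ℝ) : ℂ) :=
  fbt_theta_symbol_polar_form_general α θ hθ l1 l2 hl1 hl2 ω hω φ1 φ2 hφ1 hφ2
end

section
/- Let θ ∈ (−∞, 1/2), λ₁ = θ/(θ−1), λ₂ = (1−2θ)/(3−2θ), and Λ_θ(t) = 4λ₁λ₂ t² − 4λ₂(1+λ₁λ₂) t + 3λ₂² − λ₁² + λ₁²λ₂² + 1. Then Λ_θ(1) = 0, Λ_θ(−1) > 0, and Λ_θ(t) ≥ 0 for every t ∈ [−1, 1]. -/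
/-!
Since `λ₁` and `λ₂` come from the same `θ`, they satisfy `λ₂ (3 - λ₁) = 1 + λ₁`, and under this
relation `Λ_θ(t) = 4 λ₂ (1 - t) (1 - λ₁ + λ₁ λ₂ - λ₁ t)`. The linear factor is a convex combination
of its values at `t = 1` and `t = -1`, which are `3 (1 - λ₁)² / (3 - λ₁)` and `(3 + λ₁²) / (3 - λ₁)`.
-/

open Set

namespace LambdaTheta

theorem div_sub_one_mem_Ioo {θ : ℝ} (hθ : θ < 1 / 2) : θ / (θ - 1) ∈ Ioo (-1) 1 := by
  have hneg : θ - 1 < 0 := by linarith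
  constructor
  · rw [lt_div_iff_of_neg hneg]; linarith
  · rw [div_lt_iff_of_neg hneg]; linarith

theorem mul_three_sub_div_sub_one {θ : ℝ} (hθ₁ : θ ≠ 1) (hθ₃ : 3 - 2 * θ ≠ 0) :
    (1 - 2 * θ) / (3 - 2 * θ) * (3 - θ / (θ - 1)) = 1 + θ / (θ - 1) := by
  have : θ - 1 ≠ 0 := sub_ne_zero.mpr hθ₁
  field_simp
  ring

variable {l1 l2 : ℝ}

theorem quadratic_eq_mul_linear (h : l2 * (3 - l1) = 1 + l1) (t : ℝ) :
    4*l1*l2*t^2 - 4*l2*(1 + l1*l2)*t + 3*l2^2 - l1^2 + l1^2*l2^2 + 1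
      = 4 * l2 * (1 - t) * (1 - l1 + l1*l2 - l1*t) := by
  linear_combination (1 - l1) * (l2 - 1) * h

theorem pos_of_mul_three_sub (h : l2 * (3 - l1) = 1 + l1) (hl1 : -1 < l1) (hl1' : l1 < 3) :
    0 < l2 :=
  pos_of_mul_pos_left (by rw [h]; linarith) (by linarith)

theorem two_mul_three_sub_mul_linear (h : l2 * (3 - l1) = 1 + l1) (t : ℝ) :
    2 * (3 - l1) * (1 - l1 + l1*l2 - l1*t) = 3 * (1 + t) * (1 - l1)^2 + (1 - t) * (3 + l1^2) := by
  linear_combination 2 * l1 * h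

theorem linear_nonneg (h : l2 * (3 - l1) = 1 + l1) (hl1 : l1 < 3) {t : ℝ} (ht : t ∈ Icc (-1) 1) :
    0 ≤ 1 - l1 + l1*l2 - l1*t := by
  have hsum : 0 ≤ 2 * (3 - l1) * (1 - l1 + l1*l2 - l1*t) := by
    rw [two_mul_three_sub_mul_linear h]
    have : 0 ≤ 1 + t := by linarith [ht.1]
    have : 0 ≤ 1 - t := by linarith [ht.2]
    positivity
  exact nonneg_of_mul_nonneg_right hsum (by linarith)

theorem linear_neg_one_pos (h : l2 * (3 - l1) = 1 + l1) (hl1 : l1 < 3) :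
    0 < 1 - l1 + l1*l2 - l1*(-1) := by
  have hsum : 0 < 2 * (3 - l1) * (1 - l1 + l1*l2 - l1*(-1)) := by
    rw [two_mul_three_sub_mul_linear h]
    positivity
  exact pos_of_mul_pos_right hsum (by linarith)

end LambdaTheta

open LambdaTheta in
/-- the quadratic `Λ_θ` vanishes at `1`, is positive at `−1`,
and is nonnegative on `[−1, 1]`. -/
theorem Lambda_theta_nonneg (θ : ℝ) (hθ : θ < 1/2)
    (l1 l2 : ℝ) (hl1 : l1 = θ / (θ - 1)) (hl2 : l2 = (1 - 2*θ) / (3 - 2*θ))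
    (Λ : ℝ → ℝ)
    (hΛ : ∀ t, Λ t = 4*l1*l2*t^2 - 4*l2*(1 + l1*l2)*t + 3*l2^2 - l1^2 + l1^2*l2^2 + 1) :
    Λ 1 = 0 ∧ 0 < Λ (-1) ∧ ∀ t ∈ Set.Icc (-1 : ℝ) 1, 0 ≤ Λ t := by
  obtain ⟨hl1_gt, hl1_lt⟩ : l1 ∈ Ioo (-1) 1 := hl1 ▸ div_sub_one_mem_Ioo hθ
  have hrel : l2 * (3 - l1) = 1 + l1 := by
    rw [hl1, hl2]
    exact mul_three_sub_div_sub_one (by linarith) (by linarith)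
  have hfactor (t : ℝ) : Λ t = 4 * l2 * (1 - t) * (1 - l1 + l1*l2 - l1*t) :=
    (hΛ t).trans (quadratic_eq_mul_linear hrel t)
  have hl2_pos : 0 < l2 := pos_of_mul_three_sub hrel hl1_gt (by linarith)
  refine ⟨by simp [hfactor], ?_, fun t ht => ?_⟩
  · rw [hfactor]
    have := linear_neg_one_pos hrel (by linarith)
    positivity
  · rw [hfactor]
    have := linear_nonneg hrel (by linarith) ht
    have : 0 ≤ 1 - t := by linarith [ht.2]
    positivity
end

section
/- Let α ∈ (0,1] and θ ∈ (−∞, 1/2). Then for every x ∈ [0, 2π], the real part of the FBT-θ generating function evaluated on the unit circle is nonnegative: f_α(x) := Re(ω^{(α)}(e^{ix})) = (1/2)[ω^{(α)}(e^{ix}) + ω^{(α)}(e^{−ix})] ≥ 0. -/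
/-!
Write `A = 1 - θ + θξ` and `B` for the quadratic factor, so `ω = A^{-α} B^α`. On the closed
disk `Re A > 0`, and on the unit circle `Re (B · conj A) = (1 - Re ξ)² (1 - 2θ)(1 - θ) ≥ 0`
(the quadratic is `(1 - ξ)((3/2 - θ) - (1/2 - θ)ξ)`). Hence `arg B - arg A ∈ [-π/2, π/2]`, and
`A^{-α} B^α = exp (α (log B - log A))` has argument in `[-απ/2, απ/2]`, so nonnegative real part.
Neither `A` nor `B` lies on the negative real axis, so the principal powers commute with
conjugation: `ω(conj ξ) = conj ω(ξ)`, which gives the formula for the real part.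
-/

open Complex Real ComplexConjugate

namespace Complex

theorem re_mul_conj_eq_norm_mul_norm_mul_cos_arg_sub {z w : ℂ} (hz : z ≠ 0) (hw : w ≠ 0) :
    (w * conj z).re = ‖w‖ * ‖z‖ * Real.cos (w.arg - z.arg) := by
  rw [Real.cos_sub, cos_arg hw, cos_arg hz, sin_arg, sin_arg]
  have : ‖w‖ * ‖z‖ ≠ 0 := by positivity
  field_simp
  simp [mul_re]

theorem abs_arg_sub_arg_le_pi_div_two {z w : ℂ} (hz : 0 < z.re) (hw : w ≠ 0)
    (hzw : 0 ≤ (w * conj z).re) : |w.arg - z.arg| ≤ π / 2 := by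
  have hz0 : z ≠ 0 := fun h => by simp [h] at hz
  have hcos : 0 ≤ Real.cos (w.arg - z.arg) := by
    rw [re_mul_conj_eq_norm_mul_norm_mul_cos_arg_sub hz0 hw] at hzw
    exact nonneg_of_mul_nonneg_right hzw (by positivity)
  obtain ⟨hz1, hz2⟩ := abs_lt.mp (abs_arg_lt_pi_div_two_iff.mpr (Or.inl hz))
  have hrange : |w.arg - z.arg| < π + π / 2 :=
    abs_lt.mpr ⟨by linarith [neg_pi_lt_arg w], by linarith [arg_le_pi w]⟩
  by_contra! h
  have := Real.cos_neg_of_pi_div_two_lt_of_lt h hrange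
  rw [Real.cos_abs] at this
  linarith

theorem arg_ne_pi_of_re_mul_conj_nonneg {z w : ℂ} (hz : 0 < z.re)
    (hzw : 0 ≤ (w * conj z).re) : w.arg ≠ π := by
  intro h
  obtain ⟨hre, him⟩ := arg_eq_pi_iff.mp h
  have : (w * conj z).re = w.re * z.re := by simp [mul_re, him]
  nlinarith

theorem re_cpow_neg_mul_cpow_nonneg {z w : ℂ} {α : ℝ} (hz : 0 < z.re)
    (hzw : 0 ≤ (w * conj z).re) (hα0 : 0 ≤ α) (hα1 : α ≤ 1) :
    0 ≤ (z ^ (-(α : ℂ)) * w ^ (α : ℂ)).re := by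
  rcases hα0.eq_or_lt with rfl | hα0
  · simp
  rcases eq_or_ne w 0 with rfl | hw
  · simp [zero_cpow (ofReal_ne_zero.mpr hα0.ne')]
  have hz0 : z ≠ 0 := fun h => by simp [h] at hz
  have hexp : z ^ (-(α : ℂ)) * w ^ (α : ℂ) = exp ((log w - log z) * α) := by
    rw [cpow_def_of_ne_zero hz0, cpow_def_of_ne_zero hw, ← exp_add]
    ring_nf
  have hd := abs_le.mp (abs_arg_sub_arg_le_pi_div_two hz hw hzw)
  rw [hexp, exp_re]
  refine mul_nonneg (Real.exp_nonneg _) (Real.cos_nonneg_of_mem_Icc ?_)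
  have him : ((log w - log z) * α).im = (w.arg - z.arg) * α := by simp [log_im]
  rw [him]
  constructor <;> nlinarith [Real.pi_pos]

theorem conj_cpow_neg_mul_cpow {z w : ℂ} (α : ℝ) (hz : z.arg ≠ π) (hw : w.arg ≠ π) :
    conj z ^ (-(α : ℂ)) * conj w ^ (α : ℂ) = conj (z ^ (-(α : ℂ)) * w ^ (α : ℂ)) := by
  rw [conj_cpow _ _ hz, conj_cpow _ _ hw, map_neg, conj_ofReal, map_mul]

end Complex

noncomputable section

def fbtDenom (θ : ℝ) (ξ : ℂ) : ℂ := 1 - θ + θ * ξ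

def fbtNumer (θ : ℝ) (ξ : ℂ) : ℂ := (3 / 2 - θ) - (2 - 2 * θ) * ξ + (1 / 2 - θ) * ξ ^ 2

end

section

variable {θ : ℝ} {ξ : ℂ}

theorem fbtDenom_re_pos (hθ : θ < 1 / 2) (hξ : ‖ξ‖ ≤ 1) : 0 < (fbtDenom θ ξ).re := by
  obtain ⟨h1, h2⟩ := abs_le.mp ((abs_re_le_norm ξ).trans hξ)
  simp only [fbtDenom, sub_re, add_re, one_re, ofReal_re, mul_re, ofReal_im, zero_mul, sub_zero]
  rcases le_or_gt θ 0 with h | h <;> nlinarith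

theorem fbtNumer_mul_conj_fbtDenom_re (hξ : ‖ξ‖ = 1) :
    (fbtNumer θ ξ * conj (fbtDenom θ ξ)).re = (1 - ξ.re) ^ 2 * ((1 - 2 * θ) * (1 - θ)) := by
  have hcs : ξ.re ^ 2 + ξ.im ^ 2 = 1 := by
    rw [← sq_norm_sub_sq_re, hξ]; ring
  simp only [fbtNumer, fbtDenom, one_div, pow_two, map_add, map_sub, map_one, conj_ofReal,
    map_mul, mul_re, add_re, sub_re, div_ofNat_re, re_ofNat, ofReal_re, im_ofNat, ofReal_im,
    mul_zero, sub_zero, sub_im, mul_im, zero_mul, add_zero, sub_self, inv_re, normSq_ofNat,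
    div_self_mul_self', inv_im, neg_zero, zero_div, one_re, conj_re, conj_im, mul_neg, add_im,
    div_ofNat_im, zero_sub, one_im, zero_add, sub_neg_eq_add]
  linear_combination
    (θ * (-(2 - 2 * θ) + (1 - 2 * θ) * ξ.re) - (1 / 2 - θ) * (1 - θ + θ * ξ.re)) * hcs

theorem fbtNumer_mul_conj_fbtDenom_re_nonneg (hθ : θ < 1 / 2) (hξ : ‖ξ‖ = 1) :
    0 ≤ (fbtNumer θ ξ * conj (fbtDenom θ ξ)).re := by
  rw [fbtNumer_mul_conj_fbtDenom_re hξ]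
  exact mul_nonneg (sq_nonneg _) (mul_nonneg (by linarith) (by linarith))

theorem fbtDenom_conj (θ : ℝ) (ξ : ℂ) : fbtDenom θ (conj ξ) = conj (fbtDenom θ ξ) := by
  simp [fbtDenom]

theorem fbtNumer_conj (θ : ℝ) (ξ : ℂ) : fbtNumer θ (conj ξ) = conj (fbtNumer θ ξ) := by
  simp [fbtNumer, map_ofNat]

end

/-- nonnegativity of the real part of the FBT-θ generating
function on the unit circle:
`f_α(x) = Re(ω^{(α)}(e^{ix})) = (1/2)[ω^{(α)}(e^{ix}) + ω^{(α)}(e^{−ix})] ≥ 0`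
for `x ∈ [0, 2π]`. -/
theorem fbt_theta_symbol_nonneg (α θ : ℝ) (hα : α ∈ Set.Ioc (0:ℝ) 1) (hθ : θ < 1/2)
    (ω : ℂ → ℂ)
    (hω : ∀ ξ : ℂ, ω ξ =
      ((1 : ℂ) - (θ : ℂ) + (θ : ℂ) * ξ) ^ (-(α : ℂ)) *
        (((3/2 : ℂ) - (θ : ℂ)) - ((2 : ℂ) - 2 * (θ : ℂ)) * ξ
          + ((1/2 : ℂ) - (θ : ℂ)) * ξ ^ 2) ^ (α : ℂ)) :
    ∀ x ∈ Set.Icc (0 : ℝ) (2 * π),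
      (((ω (Complex.exp (Complex.I * x))).re : ℂ) =
        (1/2 : ℂ) * (ω (Complex.exp (Complex.I * x)) + ω (Complex.exp (-(Complex.I * x))))) ∧
      0 ≤ (ω (Complex.exp (Complex.I * x))).re := by
  intro x _
  set ξ := exp (I * x)
  have hξ : ‖ξ‖ = 1 := norm_exp_I_mul_ofReal x
  have hωξ : ω ξ = fbtDenom θ ξ ^ (-(α : ℂ)) * fbtNumer θ ξ ^ (α : ℂ) := hω ξ
  have hA := fbtDenom_re_pos hθ hξ.le
  have hAB := fbtNumer_mul_conj_fbtDenom_re_nonneg hθ hξ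
  have hξconj : exp (-(I * x)) = conj ξ := by
    rw [← exp_conj, map_mul, conj_I, conj_ofReal, neg_mul]
  refine ⟨?_, hωξ ▸ re_cpow_neg_mul_cpow_nonneg hA hAB hα.1.le hα.2⟩
  have hωconj : ω (conj ξ) = conj (ω ξ) := by
    rw [hω, ← fbtDenom, ← fbtNumer, fbtDenom_conj, fbtNumer_conj, hωξ,
      conj_cpow_neg_mul_cpow α (slitPlane_arg_ne_pi (mem_slitPlane_iff.2 (Or.inl hA)))
        (arg_ne_pi_of_re_mul_conj_nonneg hA hAB)]
  rw [hξconj, hωconj, re_eq_add_conj]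
  ring
end
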